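/- arXiv:2208.13682 — 5 statements merged into one kernel-verified Lean document; each statement's English description precedes it below -/
import Mathlib

section
/- Under the Riccati hypothesis, for every differentiable function x : ℝ → ℝⁿ satisfying x'(t) = A_cl · x(t) for all t, the Lyapunov function t ↦ x(t)ᵀ P x(t) is differentiable with derivative d/dt (x(t)ᵀ P x(t)) = −x(t)ᵀ (Q + P B R⁻¹ Bᵀ P) x(t) for all t. -/
open Matrix

lemma mulVec_dotProduct_flip {n k : ℕ} (M : Matrix (Fin n) (Fin k) ℝ)
    (u : Fin k → ℝ) (w : Fin n → ℝ) :
    (M *ᵥ u) ⬝ᵥ w = u ⬝ᵥ (Mᵀ *ᵥ w) := by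
  rw [dotProduct_comm, dotProduct_mulVec, dotProduct_comm, mulVec_transpose]

/-- Under the Riccati hypothesis, along any solution of the closed-loop system
    `ẋ = A_cl x` (with `A_cl = A + 𝓛 - B R⁻¹ Bᵀ P`), the Lyapunov function
    `t ↦ x(t)ᵀ P x(t)` is differentiable with derivative
    `-x(t)ᵀ (Q + P B R⁻¹ Bᵀ P) x(t)`. -/
theorem lyapunov_derivative_along_solutions
    {n m : ℕ} (hn : 0 < n) (hm : 0 < m)
    (A : Matrix (Fin n) (Fin n) ℝ) (B : Matrix (Fin n) (Fin m) ℝ)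
    (𝓛 : Matrix (Fin n) (Fin n) ℝ) (h𝓛 : 𝓛ᵀ = 𝓛)
    (Q : Matrix (Fin n) (Fin n) ℝ) (hQ : Q.PosSemidef)
    (R : Matrix (Fin m) (Fin m) ℝ) (hR : R.PosDef)
    (P : Matrix (Fin n) (Fin n) ℝ) (hP : P.PosDef)
    (hRic : Aᵀ * P + P * A + Q - P * B * R⁻¹ * Bᵀ * P + 𝓛 * P + P * 𝓛 = 0)
    (x : ℝ → (Fin n → ℝ)) (hx : Differentiable ℝ x)
    (hode : ∀ t, deriv x t = (A + 𝓛 - B * (R⁻¹ * Bᵀ * P)) *ᵥ x t) :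
    ∀ t, HasDerivAt (fun s => x s ⬝ᵥ (P *ᵥ x s))
      (-(x t ⬝ᵥ ((Q + P * B * R⁻¹ * Bᵀ * P) *ᵥ x t))) t := by
  intro t
  set Acl := A + 𝓛 - B * (R⁻¹ * Bᵀ * P) with hAcl
  set v : Fin n → ℝ := Acl *ᵥ x t with hv
  have hxd : HasDerivAt x v t := by
    rw [hv, ← hode t]
    exact (hx t).hasDerivAt
  have hcoord : ∀ i, HasDerivAt (fun s => x s i) (v i) t :=
    fun i => (hasDerivAt_pi.mp hxd) i
  have hPx : ∀ i, HasDerivAt (fun s => (P *ᵥ x s) i) ((P *ᵥ v) i) t := by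
    intro i
    simp only [mulVec, dotProduct]
    exact HasDerivAt.fun_sum fun j _ => (hcoord j).const_mul (P i j)
  have hmain : HasDerivAt (fun s => x s ⬝ᵥ (P *ᵥ x s))
      (v ⬝ᵥ (P *ᵥ x t) + x t ⬝ᵥ (P *ᵥ v)) t := by
    simp only [dotProduct]
    rw [Finset.sum_add_distrib.symm]
    exact HasDerivAt.fun_sum fun i _ => by
      simpa using (hcoord i).fun_mul (hPx i)
  convert hmain using 1
  have hPT : Pᵀ = P := by simpa using hP.isHermitian.eq
  have hRT : Rᵀ = R := by simpa using hR.isHermitian.eq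
  have hRsym : R⁻¹ᵀ = R⁻¹ := by rw [transpose_nonsing_inv, hRT]
  have hAclT : Aclᵀ = Aᵀ + 𝓛 - P * B * R⁻¹ * Bᵀ := by
    simp [hAcl, transpose_add, transpose_sub, transpose_mul, h𝓛, hRsym,
      hPT, Matrix.mul_assoc]
  have hkey : Aclᵀ * P + P * Acl = -(Q + P * B * R⁻¹ * Bᵀ * P) := by
    have hassoc : P * (B * (R⁻¹ * Bᵀ * P)) = P * B * R⁻¹ * Bᵀ * P := by
      simp [Matrix.mul_assoc]
    rw [hAclT, hAcl, Matrix.sub_mul, Matrix.add_mul, Matrix.mul_sub, Matrix.mul_add, hassoc]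
    linear_combination (norm := abel) hRic
  have h1 : v ⬝ᵥ (P *ᵥ x t) = x t ⬝ᵥ ((Aclᵀ * P) *ᵥ x t) := by
    rw [hv, mulVec_dotProduct_flip, mulVec_mulVec]
  have h2 : x t ⬝ᵥ (P *ᵥ v) = x t ⬝ᵥ ((P * Acl) *ᵥ x t) := by
    rw [hv, mulVec_mulVec]
  rw [h1, h2, ← dotProduct_add, ← add_mulVec, hkey, neg_mulVec, dotProduct_neg]
end

section
/- Under the Riccati hypothesis, for every solution x of the closed-loop system ẋ = A_cl x, the function t ↦ x(t)ᵀ P x(t) is nonincreasing on ℝ; in particular x(t)ᵀ P x(t) ≤ x(0)ᵀ P x(0) for all t ≥ 0, and since P is positive definite every solution is bounded on [0, ∞): there exists a constant c ≥ 0 (depending on P and x(0)) such that ‖x(t)‖ ≤ c for all t ≥ 0. -/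
open Matrix

private lemma hasDerivAt_quadForm {n : ℕ} (P : Matrix (Fin n) (Fin n) ℝ)
    {x : ℝ → Fin n → ℝ} {x' : Fin n → ℝ} {t : ℝ} (h : HasDerivAt x x' t) :
    HasDerivAt (fun t => x t ⬝ᵥ (P *ᵥ x t)) (x' ⬝ᵥ (P *ᵥ x t) + x t ⬝ᵥ (P *ᵥ x')) t := by
  simp only [dotProduct, mulVec]
  have key : ∀ i : Fin n, HasDerivAt (fun s => x s i * ∑ j, P i j * x s j)
      (x' i * (∑ j, P i j * x t j) + x t i * ∑ j, P i j * x' j) t := by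
    intro i
    exact (hasDerivAt_pi.1 h i).mul
      (HasDerivAt.fun_sum fun j _ => (hasDerivAt_pi.1 h j).const_mul (P i j))
  have := HasDerivAt.fun_sum (fun i (_ : i ∈ Finset.univ) => key i)
  rw [Finset.sum_add_distrib] at this
  exact this

private lemma mulVec_dot_eq {n : ℕ} (M P : Matrix (Fin n) (Fin n) ℝ) (v : Fin n → ℝ) :
    (M *ᵥ v) ⬝ᵥ (P *ᵥ v) = v ⬝ᵥ ((Mᵀ * P) *ᵥ v) := by
  rw [dotProduct_mulVec, dotProduct_mulVec, ← vecMul_vecMul, vecMul_transpose]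

private lemma smul_quadForm {n : ℕ} (P : Matrix (Fin n) (Fin n) ℝ) (c : ℝ) (v : Fin n → ℝ) :
    (c • v) ⬝ᵥ (P *ᵥ (c • v)) = c ^ 2 * (v ⬝ᵥ (P *ᵥ v)) := by
  rw [mulVec_smul, smul_dotProduct, dotProduct_smul, smul_eq_mul, smul_eq_mul]
  ring

/-- Under the Riccati hypothesis, for every solution `x` of the closed-loop system
    `ẋ = A_cl x` (with `A_cl = A + 𝓛 - B R⁻¹ Bᵀ P`), the function
    `t ↦ x(t)ᵀ P x(t)` is nonincreasing on ℝ; in particular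
    `x(t)ᵀ P x(t) ≤ x(0)ᵀ P x(0)` for all `t ≥ 0`, and every solution is bounded
    on `[0, ∞)`: there exists `c ≥ 0` with `‖x(t)‖ ≤ c` for all `t ≥ 0`. -/
theorem lyapunov_nonincreasing_and_bounded
    {n m : ℕ} (hn : 0 < n) (hm : 0 < m)
    (A : Matrix (Fin n) (Fin n) ℝ) (B : Matrix (Fin n) (Fin m) ℝ)
    (𝓛 : Matrix (Fin n) (Fin n) ℝ) (h𝓛 : 𝓛ᵀ = 𝓛)
    (Q : Matrix (Fin n) (Fin n) ℝ) (hQ : Q.PosSemidef)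
    (R : Matrix (Fin m) (Fin m) ℝ) (hR : R.PosDef)
    (P : Matrix (Fin n) (Fin n) ℝ) (hP : P.PosDef)
    (hRic : Aᵀ * P + P * A + Q - P * B * R⁻¹ * Bᵀ * P + 𝓛 * P + P * 𝓛 = 0)
    (x : ℝ → (Fin n → ℝ)) (hx : Differentiable ℝ x)
    (hode : ∀ t, deriv x t = (A + 𝓛 - B * (R⁻¹ * Bᵀ * P)) *ᵥ x t) :
    Antitone (fun t => x t ⬝ᵥ (P *ᵥ x t)) ∧
      (∀ t ≥ (0 : ℝ), x t ⬝ᵥ (P *ᵥ x t) ≤ x 0 ⬝ᵥ (P *ᵥ x 0)) ∧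
      ∃ c ≥ (0 : ℝ), ∀ t ≥ (0 : ℝ), ‖x t‖ ≤ c := by
  set Acl := A + 𝓛 - B * (R⁻¹ * Bᵀ * P) with hAclDef
  have hPt : Pᵀ = P := by have := hP.1.eq; simpa using this
  have hRt : (R⁻¹)ᵀ = R⁻¹ := by
    rw [transpose_nonsing_inv]
    congr 1
    have := hR.1.eq; simpa using this
  have hBt : (B * R⁻¹ * Bᵀ * P)ᵀ = P * B * R⁻¹ * Bᵀ := by
    simp [transpose_mul, hPt, hRt, Matrix.mul_assoc]
  -- key Lyapunov matrix identity
  have hkey : Aclᵀ * P + P * Acl = -(Q + P * B * R⁻¹ * Bᵀ * P) := by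
    rw [hAclDef, eq_neg_iff_add_eq_zero, ← hRic]
    simp only [transpose_add, transpose_sub, hBt, h𝓛, ← Matrix.mul_assoc]
    noncomm_ring
    simp only [Matrix.mul_assoc]
    abel
  have hX : (P * B * R⁻¹ * Bᵀ * P).PosSemidef := by
    have := hR.inv.posSemidef.conjTranspose_mul_mul_same (Bᵀ * P)
    simpa [conjTranspose_eq_transpose_of_trivial, transpose_mul, hPt, Matrix.mul_assoc] using this
  -- the solution satisfies the ODE in HasDerivAt form
  have hxd : ∀ t, HasDerivAt x (Acl *ᵥ x t) t := fun t => hode t ▸ (hx t).hasDerivAt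
  -- derivative of the Lyapunov function
  have hVd : ∀ t, HasDerivAt (fun t => x t ⬝ᵥ (P *ᵥ x t))
      (x t ⬝ᵥ ((Aclᵀ * P + P * Acl) *ᵥ x t)) t := by
    intro t
    have h := hasDerivAt_quadForm P (hxd t)
    convert h using 1
    rw [add_mulVec, dotProduct_add, mulVec_dot_eq]
    congr 1
    rw [← mulVec_mulVec]
  have hVdiff : Differentiable ℝ (fun t => x t ⬝ᵥ (P *ᵥ x t)) :=
    fun t => (hVd t).differentiableAt
  have hV' : ∀ t, deriv (fun t => x t ⬝ᵥ (P *ᵥ x t)) t ≤ 0 := by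
    intro t
    rw [(hVd t).deriv, hkey]
    have h1 : 0 ≤ x t ⬝ᵥ (Q *ᵥ x t) := by have := hQ.dotProduct_mulVec_nonneg (x t); simpa using this
    have h2 : 0 ≤ x t ⬝ᵥ ((P * B * R⁻¹ * Bᵀ * P) *ᵥ x t) := by
      have := hX.dotProduct_mulVec_nonneg (x t); simpa using this
    rw [neg_mulVec, dotProduct_neg, add_mulVec, dotProduct_add]
    linarith
  have hanti : Antitone (fun t => x t ⬝ᵥ (P *ᵥ x t)) :=
    antitone_of_deriv_nonpos hVdiff hV'
  refine ⟨hanti, fun t ht => hanti ht, ?_⟩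
  -- boundedness via the minimum of the quadratic form on the unit sphere
  have hc : Continuous fun v : Fin n → ℝ => v ⬝ᵥ (P *ᵥ v) := by
    simp only [dotProduct, mulVec]
    exact continuous_finset_sum _ fun i _ => (continuous_apply i).mul
      (continuous_finset_sum _ fun j _ => continuous_const.mul (continuous_apply j))
  have hsne : (Metric.sphere (0 : Fin n → ℝ) 1).Nonempty := by
    refine ⟨Pi.single ⟨0, hn⟩ 1, ?_⟩
    rw [mem_sphere_zero_iff_norm]
    simp [Pi.norm_single]
  obtain ⟨u, hu, hmin'⟩ := (isCompact_sphere (0 : Fin n → ℝ) 1).exists_isMinOn hsne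
    hc.continuousOn
  have hmin := isMinOn_iff.1 hmin'
  rw [mem_sphere_zero_iff_norm] at hu
  set ε := u ⬝ᵥ (P *ᵥ u) with hε
  have hεpos : 0 < ε := by
    have hune : u ≠ 0 := by intro h; rw [h] at hu; simp at hu
    have := hP.dotProduct_mulVec_pos hune; simpa using this
  have hlow : ∀ v : Fin n → ℝ, ε * ‖v‖ ^ 2 ≤ v ⬝ᵥ (P *ᵥ v) := by
    intro v
    rcases eq_or_ne v 0 with rfl | hv
    · simp
    · have hnv : (0 : ℝ) < ‖v‖ := norm_pos_iff.2 hv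
      have hu' : ‖v‖⁻¹ • v ∈ Metric.sphere (0 : Fin n → ℝ) 1 := by
        rw [mem_sphere_zero_iff_norm, norm_smul]
        simp [abs_of_pos (inv_pos.2 hnv), inv_mul_cancel₀ hnv.ne']
      have h1 := hmin _ hu'
      have h2 : (‖v‖⁻¹ • v) ⬝ᵥ (P *ᵥ (‖v‖⁻¹ • v)) = ‖v‖⁻¹ ^ 2 * (v ⬝ᵥ (P *ᵥ v)) :=
        smul_quadForm P _ v
      rw [h2] at h1
      have h3 : ε * ‖v‖ ^ 2 ≤ ‖v‖⁻¹ ^ 2 * (v ⬝ᵥ (P *ᵥ v)) * ‖v‖ ^ 2 := by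
        nlinarith [sq_nonneg ‖v‖]
      calc ε * ‖v‖ ^ 2 ≤ ‖v‖⁻¹ ^ 2 * (v ⬝ᵥ (P *ᵥ v)) * ‖v‖ ^ 2 := h3
        _ = v ⬝ᵥ (P *ᵥ v) := by
            field_simp
  refine ⟨Real.sqrt ((x 0 ⬝ᵥ (P *ᵥ x 0)) / ε), Real.sqrt_nonneg _, fun t ht => ?_⟩
  have hVt : x t ⬝ᵥ (P *ᵥ x t) ≤ x 0 ⬝ᵥ (P *ᵥ x 0) := hanti ht
  have hb : ‖x t‖ ^ 2 ≤ (x 0 ⬝ᵥ (P *ᵥ x 0)) / ε := by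
    rw [le_div_iff₀ hεpos]
    calc ‖x t‖ ^ 2 * ε = ε * ‖x t‖ ^ 2 := by ring
      _ ≤ x t ⬝ᵥ (P *ᵥ x t) := hlow (x t)
      _ ≤ x 0 ⬝ᵥ (P *ᵥ x 0) := hVt
  exact Real.le_sqrt_of_sq_le hb
end

section
/- Under the Riccati hypothesis with Q positive definite, there exists a constant c > 0 such that for every solution x of the closed-loop system ẋ = A_cl x and every t ≥ 0, x(t)ᵀ P x(t) ≤ exp(−c t) · (x(0)ᵀ P x(0)). -/
open Matrix

private lemma lyap_quad_smul {n : ℕ} (M : Matrix (Fin n) (Fin n) ℝ) (a : ℝ) (v : Fin n → ℝ) :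
    (a • v) ⬝ᵥ M *ᵥ (a • v) = a ^ 2 * (v ⬝ᵥ M *ᵥ v) := by
  rw [mulVec_smul, dotProduct_smul, smul_dotProduct]
  ring_nf

private lemma lyap_quad_continuous {n : ℕ} (M : Matrix (Fin n) (Fin n) ℝ) :
    Continuous (fun v : Fin n → ℝ => v ⬝ᵥ M *ᵥ v) := by
  simp only [dotProduct, mulVec]
  fun_prop

private lemma lyap_exists_c {n : ℕ} (hn : 0 < n) (Q P : Matrix (Fin n) (Fin n) ℝ)
    (hQ : Q.PosDef) (hP : P.PosDef) :
    ∃ c > (0:ℝ), ∀ v : Fin n → ℝ, c * (v ⬝ᵥ P *ᵥ v) ≤ v ⬝ᵥ Q *ᵥ v := by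
  haveI : Nonempty (Fin n) := Fin.pos_iff_nonempty.mp hn
  have hne : (Metric.sphere (0 : Fin n → ℝ) 1).Nonempty := by
    rw [NormedSpace.sphere_nonempty]; norm_num
  have hcpt : IsCompact (Metric.sphere (0 : Fin n → ℝ) 1) := isCompact_sphere _ _
  obtain ⟨v0, hv0S, hv0min⟩ := hcpt.exists_isMinOn hne ((lyap_quad_continuous Q).continuousOn)
  obtain ⟨w0, hw0S, hw0max⟩ := hcpt.exists_isMaxOn hne ((lyap_quad_continuous P).continuousOn)
  have hv0ne : v0 ≠ 0 := by
    intro h; rw [h] at hv0S; simp at hv0S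
  have hα : 0 < v0 ⬝ᵥ Q *ᵥ v0 := by simpa using hQ.dotProduct_mulVec_pos hv0ne
  set α := v0 ⬝ᵥ Q *ᵥ v0
  set β := w0 ⬝ᵥ P *ᵥ w0
  have hβ : 0 < β := lt_of_lt_of_le (by simpa using hP.dotProduct_mulVec_pos hv0ne) (hw0max hv0S)
  refine ⟨α / β, div_pos hα hβ, fun v => ?_⟩
  rcases eq_or_ne v 0 with rfl | hv
  · simp
  · have hvn : (0:ℝ) < ‖v‖ := norm_pos_iff.2 hv
    set u : Fin n → ℝ := ‖v‖⁻¹ • v with hu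
    have huS : u ∈ Metric.sphere (0 : Fin n → ℝ) 1 := by
      simp [hu, norm_smul, abs_of_pos (inv_pos.2 hvn), inv_mul_cancel₀ hvn.ne']
    have hvu : v = ‖v‖ • u := by
      rw [hu, smul_smul, mul_inv_cancel₀ hvn.ne', one_smul]
    have h1 : v ⬝ᵥ Q *ᵥ v = ‖v‖^2 * (u ⬝ᵥ Q *ᵥ u) := by
      calc v ⬝ᵥ Q *ᵥ v = (‖v‖ • u) ⬝ᵥ Q *ᵥ (‖v‖ • u) := by rw [← hvu]
        _ = ‖v‖^2 * (u ⬝ᵥ Q *ᵥ u) := lyap_quad_smul Q ‖v‖ u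
    have h2 : v ⬝ᵥ P *ᵥ v = ‖v‖^2 * (u ⬝ᵥ P *ᵥ u) := by
      calc v ⬝ᵥ P *ᵥ v = (‖v‖ • u) ⬝ᵥ P *ᵥ (‖v‖ • u) := by rw [← hvu]
        _ = ‖v‖^2 * (u ⬝ᵥ P *ᵥ u) := lyap_quad_smul P ‖v‖ u
    rw [h1, h2]
    have hQu : α ≤ u ⬝ᵥ Q *ᵥ u := hv0min huS
    have hPu : u ⬝ᵥ P *ᵥ u ≤ β := hw0max huS
    calc α / β * (‖v‖^2 * (u ⬝ᵥ P *ᵥ u)) ≤ α / β * (‖v‖^2 * β) := by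
          apply mul_le_mul_of_nonneg_left (by nlinarith [sq_nonneg ‖v‖]) (le_of_lt (div_pos hα hβ))
      _ = α * ‖v‖^2 := by field_simp
      _ ≤ ‖v‖^2 * (u ⬝ᵥ Q *ᵥ u) := by nlinarith [sq_nonneg ‖v‖]

private lemma lyap_hasDerivAt_quad {n : ℕ} (P : Matrix (Fin n) (Fin n) ℝ) (x : ℝ → Fin n → ℝ)
    (hx : Differentiable ℝ x) (t : ℝ) :
    HasDerivAt (fun s => x s ⬝ᵥ P *ᵥ x s)
      (deriv x t ⬝ᵥ P *ᵥ x t + x t ⬝ᵥ P *ᵥ deriv x t) t := by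
  have hxi : ∀ i, HasDerivAt (fun s => x s i) (deriv x t i) t :=
    hasDerivAt_pi.1 (hx t).hasDerivAt
  have h := HasDerivAt.fun_sum (u := Finset.univ)
    (fun i _ => ((hxi i).mul (HasDerivAt.fun_sum (u := Finset.univ)
      (fun j _ => ((hxi j).const_mul (P i j)) ))))
  convert h using 1
  · rfl
  · rfl
  · rfl
  · simp [dotProduct, mulVec, Finset.sum_add_distrib]

private lemma lyap_dot_mulVec_left {p q : ℕ} (M : Matrix (Fin p) (Fin q) ℝ)
    (v : Fin q → ℝ) (w : Fin p → ℝ) :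
    (M *ᵥ v) ⬝ᵥ w = v ⬝ᵥ (Mᵀ *ᵥ w) := by
  rw [dotProduct_mulVec, vecMul_transpose]

/-- Under the Riccati hypothesis with `Q` positive definite, there exists a constant
    `c > 0` such that for every solution `x` of the closed-loop system `ẋ = A_cl x`
    (with `A_cl = A + 𝓛 - B R⁻¹ Bᵀ P`) and every `t ≥ 0`,
    `x(t)ᵀ P x(t) ≤ exp(-c t) · (x(0)ᵀ P x(0))`. -/
theorem lyapunov_exponential_decay
    {n m : ℕ} (hn : 0 < n) (hm : 0 < m)
    (A : Matrix (Fin n) (Fin n) ℝ) (B : Matrix (Fin n) (Fin m) ℝ)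
    (𝓛 : Matrix (Fin n) (Fin n) ℝ) (h𝓛 : 𝓛ᵀ = 𝓛)
    (Q : Matrix (Fin n) (Fin n) ℝ) (hQ : Q.PosDef)
    (R : Matrix (Fin m) (Fin m) ℝ) (hR : R.PosDef)
    (P : Matrix (Fin n) (Fin n) ℝ) (hP : P.PosDef)
    (hRic : Aᵀ * P + P * A + Q - P * B * R⁻¹ * Bᵀ * P + 𝓛 * P + P * 𝓛 = 0) :
    ∃ c > (0 : ℝ), ∀ x : ℝ → (Fin n → ℝ), Differentiable ℝ x →
      (∀ t, deriv x t = (A + 𝓛 - B * (R⁻¹ * Bᵀ * P)) *ᵥ x t) →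
      ∀ t ≥ (0 : ℝ),
        x t ⬝ᵥ (P *ᵥ x t) ≤ Real.exp (-c * t) * (x 0 ⬝ᵥ (P *ᵥ x 0)) := by
  obtain ⟨c, hc, hcineq⟩ := lyap_exists_c hn Q P hQ hP
  refine ⟨c, hc, ?_⟩
  intro x hx hode t ht
  set M : Matrix (Fin n) (Fin n) ℝ := A + 𝓛 - B * (R⁻¹ * Bᵀ * P) with hMdef
  -- The key matrix identity coming from the Riccati equation
  have hkey : Mᵀ * P + P * M = -Q - (Bᵀ * P)ᵀ * R⁻¹ * (Bᵀ * P) := by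
    have hPt : Pᵀ = P := by
      have := hP.1.eq; rwa [conjTranspose_eq_transpose_of_trivial] at this
    have hRt : Rᵀ = R := by
      have := hR.1.eq; rwa [conjTranspose_eq_transpose_of_trivial] at this
    have hRit : (R⁻¹)ᵀ = R⁻¹ := by rw [transpose_nonsing_inv, hRt]
    rw [hMdef]
    simp only [transpose_sub, transpose_add, Matrix.transpose_mul, Matrix.transpose_transpose,
      hRit, hPt, h𝓛]
    linear_combination (norm := (noncomm_ring; simp only [Matrix.mul_assoc]; module)) hRic
  set V : ℝ → ℝ := fun s => x s ⬝ᵥ P *ᵥ x s with hVdef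
  have hVd : ∀ s, HasDerivAt V (x s ⬝ᵥ ((Mᵀ * P + P * M) *ᵥ x s)) s := by
    intro s
    have h := lyap_hasDerivAt_quad P x hx s
    have heq : deriv x s ⬝ᵥ P *ᵥ x s + x s ⬝ᵥ P *ᵥ deriv x s
        = x s ⬝ᵥ ((Mᵀ * P + P * M) *ᵥ x s) := by
      rw [hode s, lyap_dot_mulVec_left, mulVec_mulVec, mulVec_mulVec,
        Matrix.add_mulVec, dotProduct_add]
    exact heq ▸ h
  have hVle : ∀ s, x s ⬝ᵥ ((Mᵀ * P + P * M) *ᵥ x s) ≤ -c * V s := by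
    intro s
    rw [hkey]
    have hsplit : x s ⬝ᵥ ((-Q - (Bᵀ * P)ᵀ * R⁻¹ * (Bᵀ * P)) *ᵥ x s)
        = -(x s ⬝ᵥ Q *ᵥ x s) - ((Bᵀ * P) *ᵥ x s) ⬝ᵥ (R⁻¹ *ᵥ ((Bᵀ * P) *ᵥ x s)) := by
      rw [sub_mulVec, dotProduct_sub, neg_mulVec, dotProduct_neg]
      congr 1
      rw [← mulVec_mulVec, ← mulVec_mulVec, ← lyap_dot_mulVec_left]
    rw [hsplit]
    have hpos : 0 ≤ ((Bᵀ * P) *ᵥ x s) ⬝ᵥ (R⁻¹ *ᵥ ((Bᵀ * P) *ᵥ x s)) := by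
      have := hR.inv.posSemidef.dotProduct_mulVec_nonneg ((Bᵀ * P) *ᵥ x s)
      simpa using this
    have hQc := hcineq (x s)
    have : V s = x s ⬝ᵥ P *ᵥ x s := rfl
    linarith
  -- Grönwall-type argument
  set g : ℝ → ℝ := fun s => Real.exp (c * s) * V s with hgdef
  have hgd : ∀ s, HasDerivAt g
      (c * Real.exp (c * s) * V s + Real.exp (c * s) * (x s ⬝ᵥ ((Mᵀ * P + P * M) *ᵥ x s))) s := by
    intro s
    have h1 : HasDerivAt (fun s => Real.exp (c * s)) (c * Real.exp (c * s)) s := by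
      simpa [mul_comm, Function.comp_def] using (Real.hasDerivAt_exp (c * s)).comp s ((hasDerivAt_id s).const_mul c)
    exact h1.mul (hVd s)
  have hgdiff : Differentiable ℝ g := fun s => (hgd s).differentiableAt
  have hmono : AntitoneOn g (Set.Ici 0) := by
    apply antitoneOn_of_deriv_nonpos (convex_Ici 0) hgdiff.continuous.continuousOn
      hgdiff.differentiableOn
    intro s _
    rw [(hgd s).deriv]
    have h2 := hVle s
    have hE : (0:ℝ) < Real.exp (c * s) := Real.exp_pos _
    have h3 := mul_le_mul_of_nonneg_left h2 hE.le
    nlinarith [h3]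
  have hfinal : g t ≤ g 0 := hmono Set.self_mem_Ici (Set.mem_Ici.2 ht) ht
  have hg0 : g 0 = V 0 := by simp [hgdef]
  have hgt : Real.exp (c * t) * V t ≤ V 0 := by rw [← hg0]; exact hfinal
  have hmul := mul_le_mul_of_nonneg_left hgt (Real.exp_nonneg (-c * t))
  have hcancel : Real.exp (-c * t) * (Real.exp (c * t) * V t) = V t := by
    rw [← mul_assoc, ← Real.exp_add]
    have : -c * t + c * t = 0 := by ring
    rw [this, Real.exp_zero, one_mul]
  rw [hcancel] at hmul
  exact hmul
end

section
/- (Theorem 1, convergence form.) Under the Riccati hypothesis with Q positive definite, the closed-loop system is asymptotically stable: every solution x of ẋ = A_cl x satisfies x(t) → 0 as t → ∞. -/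
open Matrix


lemma quad_cont {n : ℕ} (M : Matrix (Fin n) (Fin n) ℝ) :
    Continuous (fun y : Fin n → ℝ => y ⬝ᵥ M *ᵥ y) := by
  simp only [dotProduct, mulVec]
  fun_prop

lemma quad_smul {n : ℕ} (M : Matrix (Fin n) (Fin n) ℝ) (c : ℝ) (y : Fin n → ℝ) :
    (c • y) ⬝ᵥ M *ᵥ (c • y) = c^2 * (y ⬝ᵥ M *ᵥ y) := by
  rw [smul_dotProduct, mulVec_smul, dotProduct_smul, smul_eq_mul, smul_eq_mul]
  ring

lemma quad_compare {n : ℕ} (hn : 0 < n) {Q P : Matrix (Fin n) (Fin n) ℝ}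
    (hQ : Q.PosDef) (hP : P.PosDef) :
    ∃ c > 0, ∀ y : Fin n → ℝ, c * (y ⬝ᵥ P *ᵥ y) ≤ y ⬝ᵥ Q *ᵥ y := by
  haveI : Nonempty (Fin n) := ⟨⟨0, hn⟩⟩
  have hsne : (Metric.sphere (0 : Fin n → ℝ) 1).Nonempty :=
    NormedSpace.sphere_nonempty.mpr zero_le_one
  have hsc : IsCompact (Metric.sphere (0 : Fin n → ℝ) 1) := isCompact_sphere 0 1
  obtain ⟨u, hu, hmin⟩ := hsc.exists_isMinOn hsne ((quad_cont Q).continuousOn)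
  obtain ⟨w, hw, hmax⟩ := hsc.exists_isMaxOn hsne ((quad_cont P).continuousOn)
  have hune : u ≠ 0 := by
    intro h; rw [mem_sphere_iff_norm, h, sub_zero, norm_zero] at hu; norm_num at hu
  have ha : 0 < u ⬝ᵥ Q *ᵥ u := by simpa using hQ.dotProduct_mulVec_pos hune
  have hb : 0 < w ⬝ᵥ P *ᵥ w := by
    have hwne : w ≠ 0 := by
      intro h; rw [mem_sphere_iff_norm, h, sub_zero, norm_zero] at hw; norm_num at hw
    simpa using hP.dotProduct_mulVec_pos hwne
  set a := u ⬝ᵥ Q *ᵥ u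
  set b := w ⬝ᵥ P *ᵥ w
  refine ⟨a / b, div_pos ha hb, fun y => ?_⟩
  rcases eq_or_ne y 0 with rfl | hy
  · simp
  · have hyn : ‖y‖ ≠ 0 := norm_ne_zero_iff.mpr hy
    set z : Fin n → ℝ := ‖y‖⁻¹ • y with hz
    have hzs : z ∈ Metric.sphere (0 : Fin n → ℝ) 1 := by
      rw [mem_sphere_iff_norm, sub_zero, norm_smul, norm_inv, norm_norm,
        inv_mul_cancel₀ hyn]
    have hy' : y = ‖y‖ • z := by
      rw [hz, smul_smul, mul_inv_cancel₀ hyn, one_smul]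
    have hQy : y ⬝ᵥ Q *ᵥ y = ‖y‖^2 * (z ⬝ᵥ Q *ᵥ z) := by
      conv_lhs => rw [hy']
      rw [quad_smul]
    have hPy : y ⬝ᵥ P *ᵥ y = ‖y‖^2 * (z ⬝ᵥ P *ᵥ z) := by
      conv_lhs => rw [hy']
      rw [quad_smul]
    have h1 : a ≤ z ⬝ᵥ Q *ᵥ z := hmin hzs
    have h2 : z ⬝ᵥ P *ᵥ z ≤ b := hmax hzs
    rw [hQy, hPy, div_mul_eq_mul_div, div_le_iff₀ hb]
    have hs : (0:ℝ) ≤ ‖y‖^2 := by positivity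
    nlinarith [mul_le_mul_of_nonneg_left h2 (mul_nonneg ha.le hs),
      mul_le_mul_of_nonneg_right h1 (mul_nonneg hs hb.le)]

lemma quad_hasDerivAt {n : ℕ} (M : Matrix (Fin n) (Fin n) ℝ) {x : ℝ → Fin n → ℝ}
    {v : Fin n → ℝ} {t : ℝ} (hx : HasDerivAt x v t) :
    HasDerivAt (fun s => x s ⬝ᵥ M *ᵥ x s)
      (v ⬝ᵥ M *ᵥ x t + x t ⬝ᵥ M *ᵥ v) t := by
  have hxi : ∀ i, HasDerivAt (fun s => x s i) (v i) t := hasDerivAt_pi.mp hx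
  have key : (fun s => x s ⬝ᵥ M *ᵥ x s) = fun s => ∑ i, ∑ j, x s i * M i j * x s j := by
    funext s
    simp only [dotProduct, mulVec, Finset.mul_sum]
    refine Finset.sum_congr rfl fun i _ => Finset.sum_congr rfl fun j _ => by ring
  have key2 : v ⬝ᵥ M *ᵥ x t + x t ⬝ᵥ M *ᵥ v
      = ∑ i, ∑ j, (v i * M i j * x t j + x t i * M i j * v j) := by
    simp only [dotProduct, mulVec, Finset.mul_sum, Finset.sum_add_distrib]
    congr 1 <;>
      exact Finset.sum_congr rfl fun i _ => Finset.sum_congr rfl fun j _ => by ring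
  rw [key, key2]
  exact HasDerivAt.fun_sum fun i _ => HasDerivAt.fun_sum fun j _ =>
    ((hxi i).mul_const (M i j)).mul (hxi j)

lemma norm_le_sqrt_dot {n : ℕ} (y : Fin n → ℝ) : ‖y‖ ≤ Real.sqrt (y ⬝ᵥ y) := by
  rw [pi_norm_le_iff_of_nonneg (Real.sqrt_nonneg _)]
  intro i
  rw [Real.norm_eq_abs, ← Real.sqrt_sq_eq_abs]
  apply Real.sqrt_le_sqrt
  rw [dotProduct]
  have : (y i)^2 = y i * y i := sq (y i) ▸ by ring
  rw [this]
  exact Finset.single_le_sum (fun j _ => mul_self_nonneg (y j)) (Finset.mem_univ i)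

lemma key_matrix_id {n m : ℕ}
    (A : Matrix (Fin n) (Fin n) ℝ) (B : Matrix (Fin n) (Fin m) ℝ)
    (𝓛 : Matrix (Fin n) (Fin n) ℝ) (h𝓛 : 𝓛ᵀ = 𝓛)
    (Q : Matrix (Fin n) (Fin n) ℝ)
    (R : Matrix (Fin m) (Fin m) ℝ) (hR : R.PosDef)
    (P : Matrix (Fin n) (Fin n) ℝ) (hP : P.PosDef)
    (hRic : Aᵀ * P + P * A + Q - P * B * R⁻¹ * Bᵀ * P + 𝓛 * P + P * 𝓛 = 0) :
    (A + 𝓛 - B * (R⁻¹ * Bᵀ * P))ᵀ * P + P * (A + 𝓛 - B * (R⁻¹ * Bᵀ * P))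
      = -(Q + P * B * R⁻¹ * Bᵀ * P) := by
  have hPt : Pᵀ = P := by
    have := hP.isHermitian
    rwa [Matrix.IsHermitian, conjTranspose_eq_transpose_of_trivial] at this
  have hRt : Rᵀ = R := by
    have := hR.isHermitian
    rwa [Matrix.IsHermitian, conjTranspose_eq_transpose_of_trivial] at this
  have hRinvt : (R⁻¹)ᵀ = R⁻¹ := by rw [transpose_nonsing_inv, hRt]
  have hBt : (B * (R⁻¹ * Bᵀ * P))ᵀ = P * B * R⁻¹ * Bᵀ := by
    simp only [transpose_mul, transpose_transpose, hPt, hRinvt, Matrix.mul_assoc]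
  have h2 : P * (B * (R⁻¹ * Bᵀ * P)) = P * B * R⁻¹ * Bᵀ * P := by
    simp [Matrix.mul_assoc]
  rw [transpose_sub, transpose_add, h𝓛, hBt, Matrix.mul_sub, h2]
  linear_combination (norm := noncomm_ring) hRic

-- quadratic form of congruence + PSD
lemma psd_quad {n m : ℕ} (B : Matrix (Fin n) (Fin m) ℝ)
    (R : Matrix (Fin m) (Fin m) ℝ) (hR : R.PosDef)
    (P : Matrix (Fin n) (Fin n) ℝ) (hP : P.PosDef) (y : Fin n → ℝ) :
    0 ≤ y ⬝ᵥ (P * B * R⁻¹ * Bᵀ * P) *ᵥ y := by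
  have hPt : Pᵀ = P := by
    have := hP.isHermitian
    rwa [Matrix.IsHermitian, conjTranspose_eq_transpose_of_trivial] at this
  have hps : ((Bᵀ * P)ᴴ * R⁻¹ * (Bᵀ * P)).PosSemidef :=
    hR.inv.posSemidef.conjTranspose_mul_mul_same (Bᵀ * P)
  have heq : (Bᵀ * P)ᴴ * R⁻¹ * (Bᵀ * P) = P * B * R⁻¹ * Bᵀ * P := by
    rw [conjTranspose_eq_transpose_of_trivial, transpose_mul, transpose_transpose, hPt]
    simp [Matrix.mul_assoc]
  rw [← heq]
  simpa using hps.dotProduct_mulVec_nonneg y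

lemma quad_form_split {n : ℕ} (X P : Matrix (Fin n) (Fin n) ℝ) (y : Fin n → ℝ) :
    (X *ᵥ y) ⬝ᵥ (P *ᵥ y) + y ⬝ᵥ P *ᵥ (X *ᵥ y) = y ⬝ᵥ ((Xᵀ * P + P * X) *ᵥ y) := by
  rw [add_mulVec, dotProduct_add, ← mulVec_mulVec, ← mulVec_mulVec,
    dotProduct_mulVec y Xᵀ, vecMul_transpose]

/-- (Theorem 1, convergence form.) Under the Riccati hypothesis with `Q` positive
    definite, the closed-loop system `ẋ = A_cl x` (with `A_cl = A + 𝓛 - B R⁻¹ Bᵀ P`)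
    is asymptotically stable: every solution tends to `0` as `t → ∞`. -/
theorem closed_loop_asymptotically_stable
    {n m : ℕ} (hn : 0 < n) (hm : 0 < m)
    (A : Matrix (Fin n) (Fin n) ℝ) (B : Matrix (Fin n) (Fin m) ℝ)
    (𝓛 : Matrix (Fin n) (Fin n) ℝ) (h𝓛 : 𝓛ᵀ = 𝓛)
    (Q : Matrix (Fin n) (Fin n) ℝ) (hQ : Q.PosDef)
    (R : Matrix (Fin m) (Fin m) ℝ) (hR : R.PosDef)
    (P : Matrix (Fin n) (Fin n) ℝ) (hP : P.PosDef)
    (hRic : Aᵀ * P + P * A + Q - P * B * R⁻¹ * Bᵀ * P + 𝓛 * P + P * 𝓛 = 0)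
    (x : ℝ → (Fin n → ℝ)) (hx : Differentiable ℝ x)
    (hode : ∀ t, deriv x t = (A + 𝓛 - B * (R⁻¹ * Bᵀ * P)) *ᵥ x t) :
    Filter.Tendsto x Filter.atTop (nhds 0) := by
  obtain ⟨c, hc, hcle⟩ := quad_compare hn hQ hP
  obtain ⟨ε, hε, hεle'⟩ := quad_compare hn hP (Matrix.PosDef.one)
  have hεle : ∀ y : Fin n → ℝ, ε * (y ⬝ᵥ y) ≤ y ⬝ᵥ P *ᵥ y := by
    intro y; have := hεle' y; rwa [one_mulVec] at this
  set Acl := A + 𝓛 - B * (R⁻¹ * Bᵀ * P) with hAcl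
  set M := P * B * R⁻¹ * Bᵀ * P with hM
  have hkey : Aclᵀ * P + P * Acl = -(Q + M) :=
    key_matrix_id A B 𝓛 h𝓛 Q R hR P hP hRic
  set V : ℝ → ℝ := fun t => x t ⬝ᵥ P *ᵥ x t with hVdef
  -- derivative of V
  have hV : ∀ t, HasDerivAt V (-(x t ⬝ᵥ Q *ᵥ x t) - (x t ⬝ᵥ M *ᵥ x t)) t := by
    intro t
    have h1 : HasDerivAt V (deriv x t ⬝ᵥ P *ᵥ x t + x t ⬝ᵥ P *ᵥ deriv x t) t :=
      quad_hasDerivAt P ((hx t).hasDerivAt)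
    have h2 : deriv x t ⬝ᵥ P *ᵥ x t + x t ⬝ᵥ P *ᵥ deriv x t
        = -(x t ⬝ᵥ Q *ᵥ x t) - (x t ⬝ᵥ M *ᵥ x t) := by
      rw [hode t, quad_form_split, hkey, neg_mulVec, dotProduct_neg, add_mulVec,
        dotProduct_add]
      ring
    rwa [h2] at h1
  -- V' + c V ≤ 0
  have hVineq : ∀ t, -(x t ⬝ᵥ Q *ᵥ x t) - (x t ⬝ᵥ M *ᵥ x t) + c * V t ≤ 0 := by
    intro t
    have h1 := hcle (x t)
    have h2 := psd_quad B R hR P hP (x t)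
    simp only [hVdef]
    rw [← hM] at h2
    linarith
  -- W = V * exp(c t) is antitone
  set W : ℝ → ℝ := fun t => V t * Real.exp (c * t) with hWdef
  have hW : ∀ t, HasDerivAt W
      ((-(x t ⬝ᵥ Q *ᵥ x t) - (x t ⬝ᵥ M *ᵥ x t)) * Real.exp (c * t)
        + V t * (Real.exp (c * t) * c)) t := by
    intro t
    have := (hV t).mul (((hasDerivAt_id t).const_mul c).exp)
    simp only [id_eq, mul_one] at this
    exact this
  have hWanti : Antitone W := by
    apply antitone_of_deriv_nonpos (fun t => (hW t).differentiableAt)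
    intro t
    rw [(hW t).deriv]
    have h := hVineq t
    have hexp : 0 < Real.exp (c * t) := Real.exp_pos _
    nlinarith
  -- decay of V
  have hVle : ∀ t : ℝ, 0 ≤ t → V t ≤ V 0 * Real.exp (-(c * t)) := by
    intro t ht
    have h := hWanti ht
    simp only [hWdef, mul_zero, Real.exp_zero, mul_one] at h
    rw [Real.exp_neg, ← div_eq_mul_inv, le_div_iff₀ (Real.exp_pos _)]
    exact h
  -- squeeze x ⬝ᵥ x → 0
  have hbound : Filter.Tendsto (fun t => (V 0 / ε) * Real.exp (-(c * t)))
      Filter.atTop (nhds 0) := by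
    have h1 : Filter.Tendsto (fun t => Real.exp (-(c * t))) Filter.atTop (nhds 0) :=
      Real.tendsto_exp_atBot.comp (Filter.tendsto_neg_atTop_atBot.comp
        (Filter.Tendsto.const_mul_atTop hc Filter.tendsto_id))
    have := h1.const_mul (V 0 / ε)
    simpa using this
  have hg : Filter.Tendsto (fun t => x t ⬝ᵥ x t) Filter.atTop (nhds 0) := by
    apply squeeze_zero' (g := fun t => (V 0 / ε) * Real.exp (-(c * t)))
    · exact Filter.Eventually.of_forall fun t => Finset.sum_nonneg fun i _ => mul_self_nonneg (x t i)
    · filter_upwards [Filter.eventually_ge_atTop (0:ℝ)] with t ht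
      have h1 := hεle (x t)
      have h2 := hVle t ht
      rw [div_mul_eq_mul_div, le_div_iff₀ hε]
      nlinarith
    · exact hbound
  -- conclude
  rw [tendsto_zero_iff_norm_tendsto_zero]
  apply squeeze_zero' (g := fun t => Real.sqrt (x t ⬝ᵥ x t))
  · exact Filter.Eventually.of_forall fun t => norm_nonneg _
  · exact Filter.Eventually.of_forall fun t => norm_le_sqrt_dot (x t)
  · have := (Real.continuous_sqrt.tendsto 0).comp hg
    rw [Real.sqrt_zero] at this
    exact this
end

section
/- (Theorem 1, spectral form.) Under the Riccati hypothesis with Q positive definite, the closed-loop matrix A_cl is Hurwitz: every eigenvalue μ ∈ ℂ of the complexification of A_cl (i.e., every μ ∈ ℂ for which there exists a nonzero v ∈ ℂⁿ with A_cl v = μ v, entries of A_cl viewed as complex numbers) satisfies Re(μ) < 0. -/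
open Matrix
open scoped ComplexOrder

private lemma map_ofReal_mul {k l o : Type*} [Fintype l]
    (M : Matrix k l ℝ) (N : Matrix l o ℝ) :
    (M * N).map Complex.ofReal = M.map Complex.ofReal * N.map Complex.ofReal := by
  ext i j
  simp only [Matrix.mul_apply, Matrix.map_apply]
  push_cast
  rfl

private lemma map_ofReal_conjTranspose {k l : Type*} (M : Matrix k l ℝ) :
    (M.map Complex.ofReal)ᴴ = Mᵀ.map Complex.ofReal := by
  ext i j
  simp [Matrix.conjTranspose_apply, Matrix.map_apply, Complex.conj_ofReal]

private lemma posSemidef_map {k : Type*} [Fintype k] [DecidableEq k]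
    {M : Matrix k k ℝ} (hM : M.PosSemidef) :
    (M.map Complex.ofReal).PosSemidef := by
  open scoped MatrixOrder in
  obtain ⟨L, rfl⟩ := CStarAlgebra.nonneg_iff_eq_star_mul_self.mp hM.nonneg
  rw [star_eq_conjTranspose]
  rw [map_ofReal_mul]
  have h : (Lᴴ).map Complex.ofReal = (L.map Complex.ofReal)ᴴ := by
    rw [map_ofReal_conjTranspose, conjTranspose_eq_transpose_of_trivial]
  rw [h]
  exact posSemidef_conjTranspose_mul_self _

private lemma posDef_map {k : Type*} [Fintype k] [DecidableEq k]
    {M : Matrix k k ℝ} (hM : M.PosDef) :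
    (M.map Complex.ofReal).PosDef := by
  have hps := posSemidef_map hM.posSemidef
  refine posDef_iff_dotProduct_mulVec.mpr ⟨hps.1, fun x hx => ?_⟩
  rcases lt_or_eq_of_le ((posSemidef_iff_dotProduct_mulVec.mp hps).2 x) with h | h
  · exact h
  · exfalso
    apply hx
    have h0 : (M.map Complex.ofReal) *ᵥ x = 0 :=
      (hps.dotProduct_mulVec_zero_iff x).mp h.symm
    have hdet : (M.map Complex.ofReal).det ≠ 0 := by
      rw [show M.map Complex.ofReal = Complex.ofRealHom.mapMatrix M from rfl,
        ← RingHom.map_det]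
      simpa using hM.det_pos.ne'
    exact eq_zero_of_mulVec_eq_zero hdet h0

/-- (Theorem 1, spectral form.) Under the Riccati hypothesis with `Q` positive
    definite, the closed-loop matrix `A_cl = A + 𝓛 - B R⁻¹ Bᵀ P` is Hurwitz:
    every eigenvalue `μ ∈ ℂ` of its complexification satisfies `Re μ < 0`. -/
theorem closed_loop_hurwitz
    {n m : ℕ} (hn : 0 < n) (hm : 0 < m)
    (A : Matrix (Fin n) (Fin n) ℝ) (B : Matrix (Fin n) (Fin m) ℝ)
    (𝓛 : Matrix (Fin n) (Fin n) ℝ) (h𝓛 : 𝓛ᵀ = 𝓛)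
    (Q : Matrix (Fin n) (Fin n) ℝ) (hQ : Q.PosDef)
    (R : Matrix (Fin m) (Fin m) ℝ) (hR : R.PosDef)
    (P : Matrix (Fin n) (Fin n) ℝ) (hP : P.PosDef)
    (hRic : Aᵀ * P + P * A + Q - P * B * R⁻¹ * Bᵀ * P + 𝓛 * P + P * 𝓛 = 0) :
    ∀ μ : ℂ, (∃ v : Fin n → ℂ, v ≠ 0 ∧
        ((A + 𝓛 - B * (R⁻¹ * Bᵀ * P)).map (Complex.ofReal)) *ᵥ v = μ • v) →
      μ.re < 0 := by
  rintro μ ⟨v, hv, hev⟩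
  -- symmetry facts
  have hPt : Pᵀ = P := by
    rw [← conjTranspose_eq_transpose_of_trivial]; exact hP.isHermitian
  have hRt : Rᵀ = R := by
    rw [← conjTranspose_eq_transpose_of_trivial]; exact hR.isHermitian
  have hRinvT : R⁻¹ᵀ = R⁻¹ := by rw [transpose_nonsing_inv, hRt]
  set C := A + 𝓛 - B * (R⁻¹ * Bᵀ * P) with hCdef
  set S := P * B * R⁻¹ * Bᵀ * P with hSdef
  -- S is positive semidefinite
  have hS : S.PosSemidef := by
    have h1 := (hR.inv.posSemidef).conjTranspose_mul_mul_same (Bᵀ * P)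
    have h2 : (Bᵀ * P)ᴴ = P * B := by
      rw [conjTranspose_eq_transpose_of_trivial, transpose_mul, hPt, transpose_transpose]
    rw [h2] at h1
    have h3 : P * B * R⁻¹ * (Bᵀ * P) = S := (Matrix.mul_assoc _ _ _).symm
    rwa [h3] at h1
  -- Lyapunov identity
  have hCt : Cᵀ = Aᵀ + 𝓛 - P * B * R⁻¹ * Bᵀ := by
    rw [hCdef]
    rw [transpose_sub, transpose_add, h𝓛, transpose_mul, transpose_mul, transpose_mul,
      hPt, hRinvT, transpose_transpose]
    noncomm_ring
    simp only [Matrix.mul_assoc]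
  have key : Cᵀ * P + P * C = -(Q + S) := by
    rw [hCt, hCdef, hSdef, ← sub_eq_zero]
    conv_rhs => rw [← hRic]
    noncomm_ring
    rw [hSdef]
    simp only [Matrix.mul_assoc]
    abel
  -- complexify
  set φ := (Complex.ofRealHom.mapMatrix : Matrix (Fin n) (Fin n) ℝ →+* Matrix (Fin n) (Fin n) ℂ)
  have hφ : ∀ M : Matrix (Fin n) (Fin n) ℝ, φ M = M.map Complex.ofReal := fun _ => rfl
  set Cc := C.map Complex.ofReal with hCc
  set Pc := P.map Complex.ofReal with hPc
  have keyC : Ccᴴ * Pc + Pc * Cc = -((Q.map Complex.ofReal) + (S.map Complex.ofReal)) := by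
    have := congrArg φ key
    simp only [map_add, _root_.map_mul, map_neg] at this
    simp only [hφ] at this
    rw [hCc, hPc, map_ofReal_conjTranspose]
    exact this
  -- quadratic form values
  set a := star v ⬝ᵥ (Pc *ᵥ v) with ha
  have h1 : star v ⬝ᵥ ((Pc * Cc) *ᵥ v) = μ * a := by
    rw [← mulVec_mulVec, hev, mulVec_smul, dotProduct_smul, smul_eq_mul]
  have h2 : star v ⬝ᵥ ((Ccᴴ * Pc) *ᵥ v) = (starRingEnd ℂ) μ * a := by
    rw [← mulVec_mulVec, dotProduct_mulVec, ← star_mulVec, hev, star_smul,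
      smul_dotProduct, smul_eq_mul]
    rfl
  have hsum : star v ⬝ᵥ ((Ccᴴ * Pc + Pc * Cc) *ᵥ v)
      = ((2 * μ.re : ℝ) : ℂ) * a := by
    rw [add_mulVec, dotProduct_add, h1, h2, ← add_mul, ← Complex.add_conj]
    ring
  have hneg : star v ⬝ᵥ ((Ccᴴ * Pc + Pc * Cc) *ᵥ v)
      = -(star v ⬝ᵥ ((Q.map Complex.ofReal) *ᵥ v) + star v ⬝ᵥ ((S.map Complex.ofReal) *ᵥ v)) := by
    rw [keyC, neg_mulVec, dotProduct_neg, add_mulVec, dotProduct_add]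
  -- positivity
  have haP : 0 < a.re := (posDef_map hP).re_dotProduct_pos hv
  have haQ : 0 < (star v ⬝ᵥ ((Q.map Complex.ofReal) *ᵥ v)).re :=
    (posDef_map hQ).re_dotProduct_pos hv
  have haS : 0 ≤ (star v ⬝ᵥ ((S.map Complex.ofReal) *ᵥ v)).re :=
    (posSemidef_map hS).re_dotProduct_nonneg v
  have hre : 2 * μ.re * a.re
      = -((star v ⬝ᵥ ((Q.map Complex.ofReal) *ᵥ v)).re
        + (star v ⬝ᵥ ((S.map Complex.ofReal) *ᵥ v)).re) := by
    have := congrArg Complex.re (hsum.symm.trans hneg)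
    simpa [Complex.mul_re] using this
  nlinarith [hre, haP, haQ, haS]
end
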